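/- arXiv:1809.02662 — 2 statements merged into one kernel-verified Lean document; each statement's English description precedes it below -/
import Mathlib

section
/- Let U ⊂ ℂ be open and let f : U → ℝ be a smooth strictly positive function, and define ρ(z,w) = |z|²/f(w) − 1 on ℂ × U. (i) At every point p = (p_z, p_w) with |p_z|² = f(p_w), the complex Hessian of ρ evaluated at the complex tangent vector (ξ, η) = (∂f/∂w(p_w), p̄_z), namely H_ρ(p; ξ, η) = ∂²ρ/∂z∂z̄(p)|ξ|² + 2Re(∂²ρ/∂z∂w̄(p)·ξ·η̄) + ∂²ρ/∂w∂w̄(p)|η|², equals f(p_w)⁻¹·|∂f/∂w(p_w)|² − ∂²f/∂w∂w̄(p_w). (ii) If |∂f/∂w|² ≥ f·∂²f/∂w∂w̄ everywhere on U, then ρ is plurisubharmonic on ℂ × U. -/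
open Complex Metric Set Real Topology Filter

noncomputable section
open scoped Classical

/-- The signed distance function to the boundary of `Ω`: negative inside, positive outside. -/
def sdist (Ω : Set (ℂ × ℂ)) (p : ℂ × ℂ) : ℝ :=
  if p ∈ Ω then -Metric.infDist p (frontier Ω) else Metric.infDist p (frontier Ω)

/-- Complexification of a real-valued function on `ℂ²`. -/
def cf (f : ℂ × ℂ → ℝ) : ℂ × ℂ → ℂ := fun p => (f p : ℂ)

/-- Wirtinger derivative `∂/∂z` (first coordinate). -/
def wdz (f : ℂ × ℂ → ℂ) (p : ℂ × ℂ) : ℂ :=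
  (fderiv ℝ f p (1, 0) - Complex.I * fderiv ℝ f p (Complex.I, 0)) / 2

/-- Wirtinger derivative `∂/∂z̄` (first coordinate). -/
def wdzbar (f : ℂ × ℂ → ℂ) (p : ℂ × ℂ) : ℂ :=
  (fderiv ℝ f p (1, 0) + Complex.I * fderiv ℝ f p (Complex.I, 0)) / 2

/-- Wirtinger derivative `∂/∂w` (second coordinate). -/
def wdw (f : ℂ × ℂ → ℂ) (p : ℂ × ℂ) : ℂ :=
  (fderiv ℝ f p (0, 1) - Complex.I * fderiv ℝ f p (0, Complex.I)) / 2

/-- Wirtinger derivative `∂/∂w̄` (second coordinate). -/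
def wdwbar (f : ℂ × ℂ → ℂ) (p : ℂ × ℂ) : ℂ :=
  (fderiv ℝ f p (0, 1) + Complex.I * fderiv ℝ f p (0, Complex.I)) / 2

/-- The complex Hessian quadratic form of a real-valued function `f` at `p`
in the direction `(ξ, η)`. -/
def cHess (f : ℂ × ℂ → ℝ) (p : ℂ × ℂ) (ξ η : ℂ) : ℝ :=
  (wdz (wdzbar (cf f)) p * ξ * (starRingEnd ℂ) ξ
    + wdz (wdwbar (cf f)) p * ξ * (starRingEnd ℂ) η
    + wdw (wdzbar (cf f)) p * η * (starRingEnd ℂ) ξ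
    + wdw (wdwbar (cf f)) p * η * (starRingEnd ℂ) η).re

/-- A (C²) function is plurisubharmonic on a set if its complex Hessian is positive
semidefinite at every point of the set. -/
def PshOn (f : ℂ × ℂ → ℝ) (S : Set (ℂ × ℂ)) : Prop :=
  ∀ p ∈ S, ∀ ξ η : ℂ, 0 ≤ cHess f p ξ η

/-- `Ω ⊆ ℂ²` is a Hartogs domain if it is invariant under rotations in the first variable. -/
def IsHartogs (Ω : Set (ℂ × ℂ)) : Prop :=
  ∀ z w : ℂ, ∀ θ : ℝ, (z, w) ∈ Ω → (Complex.exp (θ * Complex.I) * z, w) ∈ Ω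

/-- A global smooth defining function for `Ω`. -/
def IsDefiningFunction (Ω : Set (ℂ × ℂ)) (ρ : ℂ × ℂ → ℝ) : Prop :=
  ContDiff ℝ (⊤ : ℕ∞) ρ ∧ (∀ p, p ∈ Ω ↔ ρ p < 0) ∧ ∀ p ∈ frontier Ω, fderiv ℝ ρ p ≠ 0

/-- `Ω` has smooth boundary if it admits a global smooth defining function. -/
def HasSmoothBoundary (Ω : Set (ℂ × ℂ)) : Prop :=
  ∃ ρ, IsDefiningFunction Ω ρ

/-- `(ξ, η)` is a complex tangent vector to `bΩ` at `p` (with respect to the signed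
distance function). -/
def IsComplexTangent (Ω : Set (ℂ × ℂ)) (p : ℂ × ℂ) (ξ η : ℂ) : Prop :=
  ξ * wdz (cf (sdist Ω)) p + η * wdw (cf (sdist Ω)) p = 0

/-- Levi pseudoconvexity of `Ω`, expressed via the signed distance function. -/
def IsPseudoconvex (Ω : Set (ℂ × ℂ)) : Prop :=
  ∀ p ∈ frontier Ω, ∀ ξ η : ℂ, IsComplexTangent Ω p ξ η → 0 ≤ cHess (sdist Ω) p ξ η

/-- Strict pseudoconvexity at a boundary point. -/
def StrictlyPseudoconvexAt (Ω : Set (ℂ × ℂ)) (p : ℂ × ℂ) : Prop :=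
  ∀ ξ η : ℂ, (ξ, η) ≠ (0, 0) → IsComplexTangent Ω p ξ η → 0 < cHess (sdist Ω) p ξ η

/-- The set of weakly pseudoconvex boundary points. -/
def weakPoints (Ω : Set (ℂ × ℂ)) : Set (ℂ × ℂ) :=
  {p ∈ frontier Ω | ¬ StrictlyPseudoconvexAt Ω p}

/-- `τ` is a Diederich–Fornæss exponent for `Ω`. -/
def IsDFExponent (Ω : Set (ℂ × ℂ)) (τ : ℝ) : Prop :=
  0 < τ ∧ τ < 1 ∧ ∃ ρ, IsDefiningFunction Ω ρ ∧
    PshOn (fun p => -(-ρ p) ^ τ) Ω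

/-- The Diederich–Fornæss index of `Ω`. -/
def DFIndex (Ω : Set (ℂ × ℂ)) : ℝ := sSup {τ | IsDFExponent Ω τ}

/-- A pseudoconvex open set: one admitting a smooth plurisubharmonic exhaustion function. -/
def IsPseudoconvexOpen (D : Set (ℂ × ℂ)) : Prop :=
  IsOpen D ∧ ∃ φ : ℂ × ℂ → ℝ, ContDiffOn ℝ (⊤ : ℕ∞) φ D ∧ PshOn φ D ∧
    ∀ c : ℝ, IsCompact {p ∈ D | φ p ≤ c}

/-- `closure Ω` admits a Stein neighborhood basis. -/
def AdmitsSteinBasis (Ω : Set (ℂ × ℂ)) : Prop :=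
  ∀ U : Set (ℂ × ℂ), IsOpen U → closure Ω ⊆ U →
    ∃ D : Set (ℂ × ℂ), IsPseudoconvexOpen D ∧ closure Ω ⊆ D ∧ D ⊆ U


/-- The Wirtinger derivative `∂/∂w` for functions of one complex variable. -/
def cdw (g : ℂ → ℂ) (w : ℂ) : ℂ :=
  (fderiv ℝ g w 1 - Complex.I * fderiv ℝ g w Complex.I) / 2

/-- The Wirtinger derivative `∂/∂w̄` for functions of one complex variable. -/
def cdwbar (g : ℂ → ℂ) (w : ℂ) : ℂ :=
  (fderiv ℝ g w 1 + Complex.I * fderiv ℝ g w Complex.I) / 2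

/-- Complexification of a real-valued function on `ℂ`. -/
def cf0 (f : ℂ → ℝ) : ℂ → ℂ := fun w => (f w : ℂ)

/-! Write `ρ = |z|² g(w) - 1` with `g = 1/f`. Each Wirtinger derivative of a product
`A(z) B(w)` hits only one factor, so the Levi form of `ρ` is
`g |ξ|² + 2 Re (z̄ g_w̄ ξ η̄) + |z|² g_{ww̄} |η|²`. Substituting `g_w = -f_w/f²`,
`g_w̄ = -conj(f_w)/f²` and `g_{ww̄} = 2|f_w|²/f³ - f_{ww̄}/f²` and multiplying by `f³` gives
`|f ξ - z f_w η|² + |z|² |η|² (|f_w|² - f f_{ww̄})`.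
On `|z|² = f` the first term vanishes at `(ξ, η) = (f_w, z̄)`, which gives (i); under the
hypothesis of (ii) both terms are nonnegative. -/

section OneVariable

variable {F G : ℂ → ℂ} {w : ℂ}

lemma cdw_congr (h : F =ᶠ[𝓝 w] G) : cdw F w = cdw G w := by
  simp only [cdw, h.fderiv_eq]

lemma cdw_mul (hF : DifferentiableAt ℝ F w) (hG : DifferentiableAt ℝ G w) :
    cdw (fun x => F x * G x) w = cdw F w * G w + F w * cdw G w := by
  simp only [cdw, fderiv_fun_mul hF hG, add_apply, smul_apply, smul_eq_mul]
  ring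

lemma cdwbar_mul (hF : DifferentiableAt ℝ F w) (hG : DifferentiableAt ℝ G w) :
    cdwbar (fun x => F x * G x) w = cdwbar F w * G w + F w * cdwbar G w := by
  simp only [cdwbar, fderiv_fun_mul hF hG, add_apply, smul_apply, smul_eq_mul]
  ring

@[simp] lemma cdw_id : cdw (fun x => x) w = 1 := by
  simp only [cdw, fderiv_fun_id, ContinuousLinearMap.id_apply, I_mul_I]; ring

@[simp] lemma cdwbar_id : cdwbar (fun x => x) w = 0 := by
  simp only [cdwbar, fderiv_fun_id, ContinuousLinearMap.id_apply, I_mul_I]; ring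

@[simp] lemma cdw_conj : cdw (fun x => (starRingEnd ℂ) x) w = 0 := by
  simp only [cdw, ← conjCLE_apply, ContinuousLinearEquiv.fderiv]
  simp

@[simp] lemma cdwbar_conj : cdwbar (fun x => (starRingEnd ℂ) x) w = 1 := by
  simp only [cdwbar, ← conjCLE_apply, ContinuousLinearEquiv.fderiv]
  simp

lemma cdw_mul_conj_self : cdw (fun x => x * (starRingEnd ℂ) x) w = (starRingEnd ℂ) w := by
  rw [cdw_mul (F := fun x => x) (G := fun x => (starRingEnd ℂ) x) differentiableAt_id
    conjCLE.differentiableAt]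
  simp

lemma cdwbar_mul_conj_self : cdwbar (fun x => x * (starRingEnd ℂ) x) w = w := by
  rw [cdwbar_mul (F := fun x => x) (G := fun x => (starRingEnd ℂ) x) differentiableAt_id
    conjCLE.differentiableAt]
  simp

lemma cdw_comp {φ : ℂ → ℂ} {φ' : ℂ} (hφ : HasDerivAt φ φ' (F w))
    (hF : DifferentiableAt ℝ F w) : cdw (fun x => φ (F x)) w = φ' * cdw F w := by
  have := ((hφ.hasFDerivAt.restrictScalars ℝ).comp w hF.hasFDerivAt).fderiv
  simp only [cdw, Function.comp_def] at this ⊢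
  simp only [this, ContinuousLinearMap.comp_apply, ContinuousLinearMap.coe_restrictScalars',
    ContinuousLinearMap.toSpanSingleton_apply, smul_eq_mul]
  ring

lemma cdwbar_comp {φ : ℂ → ℂ} {φ' : ℂ} (hφ : HasDerivAt φ φ' (F w))
    (hF : DifferentiableAt ℝ F w) : cdwbar (fun x => φ (F x)) w = φ' * cdwbar F w := by
  have := ((hφ.hasFDerivAt.restrictScalars ℝ).comp w hF.hasFDerivAt).fderiv
  simp only [cdwbar, Function.comp_def] at this ⊢
  simp only [this, ContinuousLinearMap.comp_apply, ContinuousLinearMap.coe_restrictScalars',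
    ContinuousLinearMap.toSpanSingleton_apply, smul_eq_mul]
  ring

lemma ContDiffAt.differentiableAt_cdwbar (hF : ContDiffAt ℝ 2 F w) :
    DifferentiableAt ℝ (cdwbar F) w := by
  have h : DifferentiableAt ℝ (fderiv ℝ F) w :=
    (hF.fderiv_right (m := 1) (by norm_num)).differentiableAt (by norm_num)
  unfold cdwbar
  fun_prop

lemma cdwbar_cf0 {f : ℂ → ℝ} (hf : DifferentiableAt ℝ f w) :
    cdwbar (cf0 f) w = (starRingEnd ℂ) (cdw (cf0 f) w) := by
  have h : fderiv ℝ (cf0 f) w = ofRealCLM.comp (fderiv ℝ f w) :=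
    (ofRealCLM.hasFDerivAt.comp w hf.hasFDerivAt).fderiv
  simp only [cdw, cdwbar, h, ContinuousLinearMap.comp_apply, ofRealCLM_apply, map_div₀,
    map_sub, map_mul, conj_ofReal, conj_I, map_ofNat]
  ring

end OneVariable

section TwoVariables

variable {Φ Ψ : ℂ × ℂ → ℂ} {A B : ℂ → ℂ} {p : ℂ × ℂ}

lemma wdz_congr (h : Φ =ᶠ[𝓝 p] Ψ) : wdz Φ p = wdz Ψ p := by
  simp only [wdz, h.fderiv_eq]

lemma wdw_congr (h : Φ =ᶠ[𝓝 p] Ψ) : wdw Φ p = wdw Ψ p := by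
  simp only [wdw, h.fderiv_eq]

lemma wdzbar_add_const (c : ℂ) : wdzbar (fun q => Φ q + c) p = wdzbar Φ p := by
  simp only [wdzbar, fderiv_add_const]

lemma wdwbar_add_const (c : ℂ) : wdwbar (fun q => Φ q + c) p = wdwbar Φ p := by
  simp only [wdwbar, fderiv_add_const]

lemma fderiv_mul_prod_apply (hA : DifferentiableAt ℝ A p.1) (hB : DifferentiableAt ℝ B p.2)
    (v u : ℂ) : fderiv ℝ (fun q : ℂ × ℂ => A q.1 * B q.2) p (v, u) =
      fderiv ℝ A p.1 v * B p.2 + A p.1 * fderiv ℝ B p.2 u := by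
  have hA' : HasFDerivAt (fun q : ℂ × ℂ => A q.1)
      ((fderiv ℝ A p.1).comp (ContinuousLinearMap.fst ℝ ℂ ℂ)) p :=
    hA.hasFDerivAt.comp p hasFDerivAt_fst
  have hB' : HasFDerivAt (fun q : ℂ × ℂ => B q.2)
      ((fderiv ℝ B p.2).comp (ContinuousLinearMap.snd ℝ ℂ ℂ)) p :=
    hB.hasFDerivAt.comp p hasFDerivAt_snd
  rw [(hA'.fun_mul hB').fderiv]
  simp only [add_apply, smul_apply, smul_eq_mul, ContinuousLinearMap.comp_apply,
    ContinuousLinearMap.coe_fst', ContinuousLinearMap.coe_snd']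
  ring

lemma wdz_mul_prod (hA : DifferentiableAt ℝ A p.1) (hB : DifferentiableAt ℝ B p.2) :
    wdz (fun q => A q.1 * B q.2) p = cdw A p.1 * B p.2 := by
  simp only [wdz, cdw, fderiv_mul_prod_apply hA hB, map_zero, mul_zero, add_zero]
  ring

lemma wdw_mul_prod (hA : DifferentiableAt ℝ A p.1) (hB : DifferentiableAt ℝ B p.2) :
    wdw (fun q => A q.1 * B q.2) p = A p.1 * cdw B p.2 := by
  simp only [wdw, cdw, fderiv_mul_prod_apply hA hB, map_zero, zero_mul, zero_add]
  ring

lemma wdzbar_mul_prod (hA : DifferentiableAt ℝ A p.1) (hB : DifferentiableAt ℝ B p.2) :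
    wdzbar (fun q => A q.1 * B q.2) p = cdwbar A p.1 * B p.2 := by
  simp only [wdzbar, cdwbar, fderiv_mul_prod_apply hA hB, map_zero, mul_zero, add_zero]
  ring

lemma wdwbar_mul_prod (hA : DifferentiableAt ℝ A p.1) (hB : DifferentiableAt ℝ B p.2) :
    wdwbar (fun q => A q.1 * B q.2) p = A p.1 * cdwbar B p.2 := by
  simp only [wdwbar, cdwbar, fderiv_mul_prod_apply hA hB, map_zero, zero_mul, zero_add]
  ring

end TwoVariables

lemma differentiableAt_mul_conj_self (x : ℂ) :
    DifferentiableAt ℝ (fun x : ℂ => x * (starRingEnd ℂ) x) x :=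
  differentiableAt_fun_id.mul conjCLE.differentiableAt

lemma cHess_eq_of_cf_eq_mul_conj_mul {φ : ℂ × ℂ → ℝ} {g : ℂ → ℂ} {c : ℂ} {p : ℂ × ℂ}
    (hφ : cf φ = fun q => q.1 * (starRingEnd ℂ) q.1 * g q.2 + c)
    (hg : ∀ᶠ w in 𝓝 p.2, DifferentiableAt ℝ g w)
    (hg' : DifferentiableAt ℝ (cdwbar g) p.2) (ξ η : ℂ) :
    cHess φ p ξ η =
      (g p.2 * ξ * (starRingEnd ℂ) ξ
        + (starRingEnd ℂ) p.1 * cdwbar g p.2 * ξ * (starRingEnd ℂ) η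
        + p.1 * cdw g p.2 * η * (starRingEnd ℂ) ξ
        + p.1 * (starRingEnd ℂ) p.1 * cdw (cdwbar g) p.2 * η * (starRingEnd ℂ) η).re := by
  have hg_near : ∀ᶠ q in 𝓝 p, DifferentiableAt ℝ g q.2 :=
    (continuousAt_snd (p := p)).tendsto.eventually hg
  have hzbar : wdzbar (cf φ) =ᶠ[𝓝 p] fun q => q.1 * g q.2 := by
    filter_upwards [hg_near] with q hq
    rw [hφ, wdzbar_add_const, wdzbar_mul_prod (differentiableAt_mul_conj_self q.1) hq,
      cdwbar_mul_conj_self]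
  have hwbar : wdwbar (cf φ) =ᶠ[𝓝 p] fun q => q.1 * (starRingEnd ℂ) q.1 * cdwbar g q.2 := by
    filter_upwards [hg_near] with q hq
    rw [hφ, wdwbar_add_const, wdwbar_mul_prod (differentiableAt_mul_conj_self q.1) hq]
  rw [cHess, wdz_congr hzbar, wdw_congr hzbar, wdz_congr hwbar, wdw_congr hwbar,
    wdz_mul_prod differentiableAt_fun_id hg.self_of_nhds,
    wdw_mul_prod differentiableAt_fun_id hg.self_of_nhds,
    wdz_mul_prod (differentiableAt_mul_conj_self p.1) hg',
    wdw_mul_prod (differentiableAt_mul_conj_self p.1) hg', cdw_id, cdw_mul_conj_self, one_mul]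

section Reciprocal

variable {F : ℂ → ℂ} {w : ℂ}

lemma cdw_inv (hF : DifferentiableAt ℝ F w) (h0 : F w ≠ 0) :
    cdw (fun x => (F x)⁻¹) w = -(F w ^ 2)⁻¹ * cdw F w :=
  cdw_comp (hasDerivAt_inv h0) hF

lemma cdwbar_inv (hF : DifferentiableAt ℝ F w) (h0 : F w ≠ 0) :
    cdwbar (fun x => (F x)⁻¹) w = -(F w ^ 2)⁻¹ * cdwbar F w :=
  cdwbar_comp (hasDerivAt_inv h0) hF

lemma cdwbar_inv_eventuallyEq (hF : ∀ᶠ x in 𝓝 w, DifferentiableAt ℝ F x ∧ F x ≠ 0) :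
    cdwbar (fun x => (F x)⁻¹) =ᶠ[𝓝 w] fun x => -(F x ^ 2)⁻¹ * cdwbar F x := by
  filter_upwards [hF] with x ⟨hd, h0⟩
  exact cdwbar_inv hd h0

lemma differentiableAt_cdwbar_inv (hF : ∀ᶠ x in 𝓝 w, DifferentiableAt ℝ F x ∧ F x ≠ 0)
    (hF' : DifferentiableAt ℝ (cdwbar F) w) :
    DifferentiableAt ℝ (cdwbar fun x => (F x)⁻¹) w := by
  obtain ⟨hd, h0⟩ := hF.self_of_nhds
  refine (cdwbar_inv_eventuallyEq hF).differentiableAt_iff.mpr ?_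
  exact (((hd.pow 2).inv (pow_ne_zero 2 h0)).neg).mul hF'

lemma cdw_cdwbar_inv (hF : ∀ᶠ x in 𝓝 w, DifferentiableAt ℝ F x ∧ F x ≠ 0)
    (hF' : DifferentiableAt ℝ (cdwbar F) w) :
    cdw (cdwbar fun x => (F x)⁻¹) w =
      2 * (F w ^ 3)⁻¹ * cdw F w * cdwbar F w - (F w ^ 2)⁻¹ * cdw (cdwbar F) w := by
  obtain ⟨hd, h0⟩ := hF.self_of_nhds
  have hφ : HasDerivAt (fun y : ℂ => -(y ^ 2)⁻¹) (2 * (F w ^ 3)⁻¹) (F w) :=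
    (((hasDerivAt_pow 2 (F w)).fun_inv (pow_ne_zero 2 h0)).fun_neg).congr_deriv
      (by field_simp; ring)
  have hd' : DifferentiableAt ℝ (fun x => -(F x ^ 2)⁻¹) w :=
    ((hd.pow 2).inv (pow_ne_zero 2 h0)).neg
  rw [cdw_congr (cdwbar_inv_eventuallyEq hF), cdw_mul hd' hF', cdw_comp hφ hd]
  ring

end Reciprocal

lemma ContDiffAt.cf0 {f : ℂ → ℝ} {w : ℂ} {n : WithTop ℕ∞} (hf : ContDiffAt ℝ n f w) :
    ContDiffAt ℝ n (cf0 f) w :=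
  ofRealCLM.contDiff.contDiffAt.comp w hf

lemma cube_mul_cHess_normSq_div_sub_one {f : ℂ → ℝ} {p : ℂ × ℂ}
    (hf : ∀ᶠ w in 𝓝 p.2, ContDiffAt ℝ 2 f w ∧ f w ≠ 0) (ξ η : ℂ) :
    f p.2 ^ 3 * cHess (fun q => normSq q.1 / f q.2 - 1) p ξ η =
      normSq (f p.2 * ξ - p.1 * cdw (cf0 f) p.2 * η) +
        normSq p.1 * normSq η *
          (normSq (cdw (cf0 f) p.2) - f p.2 * (cdw (cdwbar (cf0 f)) p.2).re) := by
  have hF : ∀ᶠ w in 𝓝 p.2, DifferentiableAt ℝ (cf0 f) w ∧ cf0 f w ≠ 0 :=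
    hf.mono fun w hw => ⟨hw.1.cf0.differentiableAt (by norm_num), ofReal_ne_zero.mpr hw.2⟩
  obtain ⟨hf2, hf0⟩ := hf.self_of_nhds
  have hF' : DifferentiableAt ℝ (cdwbar (cf0 f)) p.2 := hf2.cf0.differentiableAt_cdwbar
  have hcf : cf (fun q => normSq q.1 / f q.2 - 1) =
      fun q => q.1 * (starRingEnd ℂ) q.1 * (cf0 f q.2)⁻¹ + -1 := by
    ext q
    simp only [cf, cf0, ofReal_sub, ofReal_div, ofReal_one, ← mul_conj]
    ring
  have hg : ∀ᶠ w in 𝓝 p.2, DifferentiableAt ℝ (fun x => (cf0 f x)⁻¹) w :=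
    hF.mono fun w hw => hw.1.inv hw.2
  rw [cHess_eq_of_cf_eq_mul_conj_mul (g := fun x => (cf0 f x)⁻¹) hcf hg (differentiableAt_cdwbar_inv hF hF'),
    cdw_inv hF.self_of_nhds.1 hF.self_of_nhds.2, cdwbar_inv hF.self_of_nhds.1 hF.self_of_nhds.2,
    cdw_cdwbar_inv hF hF', cdwbar_cf0 (hf2.differentiableAt (by norm_num)),
    ← re_ofReal_mul]
  set a := cdw (cf0 f) p.2
  set b := cdw (cdwbar (cf0 f)) p.2
  have hf0' : (f p.2 : ℂ) ≠ 0 := ofReal_ne_zero.mpr hf0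
  calc _ = ((normSq (f p.2 * ξ - p.1 * a * η) + normSq p.1 * normSq η * normSq a : ℝ)
        - (normSq p.1 * normSq η * f p.2 : ℝ) * b : ℂ).re := by
        congr 1
        simp only [cf0, ofReal_pow, ofReal_add, ofReal_mul, ← mul_conj, map_sub, map_mul,
          conj_ofReal]
        field_simp
        ring
    _ = _ := by
        simp only [sub_re, ofReal_re, re_ofReal_mul]
        ring

/-- from the proof of Lemma 3.2 of Abdulsahib–Harrington: the Levi form
of `ρ(z,w) = |z|²/f(w) − 1` on the complex tangent direction, and the plurisubharmonicity
criterion `|f_w|² ≥ f f_{ww̄}`. -/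
theorem stmt_15 (U : Set ℂ) (hU : IsOpen U) (f : ℂ → ℝ)
    (hf : ContDiffOn ℝ (⊤ : ℕ∞) f U) (hfpos : ∀ w ∈ U, 0 < f w) :
    (∀ p : ℂ × ℂ, p.2 ∈ U → Complex.normSq p.1 = f p.2 →
      cHess (fun q => Complex.normSq q.1 / f q.2 - 1) p
          (cdw (cf0 f) p.2) ((starRingEnd ℂ) p.1) =
        (f p.2)⁻¹ * Complex.normSq (cdw (cf0 f) p.2) - (cdw (cdwbar (cf0 f)) p.2).re) ∧
    ((∀ w ∈ U, f w * (cdw (cdwbar (cf0 f)) w).re ≤ Complex.normSq (cdw (cf0 f) w)) →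
      PshOn (fun q => Complex.normSq q.1 / f q.2 - 1) (Set.univ ×ˢ U)) := by
  have hloc : ∀ w ∈ U, ∀ᶠ x in 𝓝 w, ContDiffAt ℝ 2 f x ∧ f x ≠ 0 := fun w hw =>
    eventually_of_mem (hU.mem_nhds hw) fun x hx =>
      ⟨(hf.contDiffAt (hU.mem_nhds hx)).of_le (by norm_cast), (hfpos x hx).ne'⟩
  refine ⟨fun p hp hz => ?_, fun hcond p hp ξ η => ?_⟩
  · have h := cube_mul_cHess_normSq_div_sub_one (hloc p.2 hp) (cdw (cf0 f) p.2)
      ((starRingEnd ℂ) p.1)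
    have htangent : (f p.2 : ℂ) * cdw (cf0 f) p.2 - p.1 * cdw (cf0 f) p.2 * (starRingEnd ℂ) p.1
        = 0 := by
      linear_combination cdw (cf0 f) p.2 * (congrArg ofReal hz.symm).trans (mul_conj p.1).symm
    rw [htangent, normSq_zero, normSq_conj, hz, zero_add] at h
    have hf0 : f p.2 ≠ 0 := (hfpos p.2 hp).ne'
    apply mul_left_cancel₀ (pow_ne_zero 3 hf0)
    rw [h]
    field_simp
  · rw [← mul_nonneg_iff_of_pos_left (pow_pos (hfpos p.2 hp.2) 3),
      cube_mul_cHess_normSq_div_sub_one (hloc p.2 hp.2)]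
    exact add_nonneg (normSq_nonneg _) (mul_nonneg (mul_nonneg (normSq_nonneg _)
      (normSq_nonneg _)) (sub_nonneg.mpr (hcond p.2 hp.2)))

end
end

section
/- Let 0 < τ < 1, C > 0, and 0 < A ≤ B be real numbers satisfying (2τC/(1−τ))·log(B/A) < π. Then there exist φ ∈ ℝ and ε > 0 such that the function g(t) = sin((2τC/(1−τ))·log t + φ) − ε satisfies g(t) > 0 and −(1/4)·τ·(1−τ)²·(g'(t) + t·g''(t)) − (C²/t)·τ³·g(t) ≥ ε·τ³·C²/t for all t ∈ [A, B]. -/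
open Set Real

/-
With `k = 2τC/(1-τ)`, the Euler operator `g ↦ g' + t g''` sends `sin (k log t + φ) - ε` to
`-(k²/t) sin (k log t + φ)`, and `(1/4) τ (1-τ)² k² = τ³ C²`; so the inequality holds with
equality. Positivity of `g`: choosing `φ` so that `k log t + φ` ranges over an interval of
length `L = k log (B/A) < π` centred at `π/2` gives `sin (k log t + φ) ≥ cos (L/2) > 0`, and
`ε = cos (L/2) / 2` works.
-/

theorem hasDerivAt_sin_mul_log_add (k φ : ℝ) {t : ℝ} (ht : t ≠ 0) :
    HasDerivAt (fun s => sin (k * log s + φ)) (cos (k * log t + φ) * (k * t⁻¹)) t :=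
  (((hasDerivAt_log ht).const_mul k).add_const φ).sin

theorem deriv_add_mul_deriv_deriv_sin_mul_log_add_sub (k φ ε : ℝ) {t : ℝ} (ht : t ≠ 0) :
    deriv (fun s => sin (k * log s + φ) - ε) t +
        t * deriv (deriv (fun s => sin (k * log s + φ) - ε)) t =
      -(k ^ 2 / t) * sin (k * log t + φ) := by
  have hderiv : ∀ s ≠ 0, deriv (fun s => sin (k * log s + φ) - ε) s =
      cos (k * log s + φ) * (k * s⁻¹) := fun s hs =>
    ((hasDerivAt_sin_mul_log_add k φ hs).sub_const ε).deriv
  have hderiv_eventually : deriv (fun s => sin (k * log s + φ) - ε) =ᶠ[nhds t]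
      fun s => cos (k * log s + φ) * (k * s⁻¹) := by
    filter_upwards [isOpen_compl_singleton.mem_nhds ht] with s hs
    exact hderiv s hs
  have hcos : HasDerivAt (fun s => cos (k * log s + φ))
      (-sin (k * log t + φ) * (k * t⁻¹)) t :=
    (((hasDerivAt_log ht).const_mul k).add_const φ).cos
  have hderiv_deriv : HasDerivAt (fun s => cos (k * log s + φ) * (k * s⁻¹))
      (-sin (k * log t + φ) * (k * t⁻¹) * (k * t⁻¹) +
        cos (k * log t + φ) * (k * -(t ^ 2)⁻¹)) t :=
    hcos.mul ((hasDerivAt_inv ht).const_mul k)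
  rw [hderiv t ht, hderiv_eventually.deriv_eq, hderiv_deriv.deriv]
  field_simp
  ring

theorem cos_le_sin_of_abs_sub_pi_div_two_le {x r : ℝ} (hx : |x - π / 2| ≤ r) (hr : r ≤ π) :
    cos r ≤ sin x := by
  rw [← cos_sub_pi_div_two, ← cos_abs (x - π / 2)]
  exact cos_le_cos_of_nonneg_of_le_pi (abs_nonneg _) hr hx

theorem abs_mul_log_sub_mul_log_midpoint_le {k A B t : ℝ} (hk : 0 ≤ k) (hA : 0 < A)
    (ht : t ∈ Icc A B) :
    |k * log t - k * (log A + log B) / 2| ≤ k * log (B / A) / 2 := by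
  have hAt : log A ≤ log t := log_le_log hA ht.1
  have htB : log t ≤ log B := log_le_log (hA.trans_le ht.1) ht.2
  rw [log_div (hA.trans_le (ht.1.trans ht.2)).ne' hA.ne', abs_le]
  constructor <;> nlinarith [mul_le_mul_of_nonneg_left hAt hk, mul_le_mul_of_nonneg_left htB hk]

/-- from the proof of Theorem 1.5 of Abdulsahib–Harrington: the explicit
positive solution `g(t) = sin((2τC/(1-τ))·log t + φ) − ε` of the key differential
inequality on `[A, B]`. -/
theorem stmt_16 (τ C A B : ℝ) (hτ0 : 0 < τ) (hτ1 : τ < 1) (hC : 0 < C) (hA : 0 < A)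
    (hAB : A ≤ B) (h : 2 * τ * C / (1 - τ) * Real.log (B / A) < π) :
    ∃ φ ε : ℝ, 0 < ε ∧ ∀ t ∈ Set.Icc A B,
      0 < Real.sin (2 * τ * C / (1 - τ) * Real.log t + φ) - ε ∧
      ε * τ ^ 3 * C ^ 2 / t ≤
        -(1 / 4) * τ * (1 - τ) ^ 2 *
            (deriv (fun s => Real.sin (2 * τ * C / (1 - τ) * Real.log s + φ) - ε) t +
              t * deriv (deriv
                (fun s => Real.sin (2 * τ * C / (1 - τ) * Real.log s + φ) - ε)) t) -
          C ^ 2 / t * τ ^ 3 * (Real.sin (2 * τ * C / (1 - τ) * Real.log t + φ) - ε) := by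
  set k := 2 * τ * C / (1 - τ) with hk_def
  have hτ' : 0 < 1 - τ := sub_pos.2 hτ1
  have hk : 0 < k := by positivity
  set L := k * log (B / A)
  have hL : 0 ≤ L := mul_nonneg hk.le (log_nonneg ((one_le_div hA).2 hAB))
  have hcos : 0 < cos (L / 2) := cos_pos_of_mem_Ioo ⟨by linarith [pi_pos], by linarith⟩
  refine ⟨π / 2 - k * (log A + log B) / 2, cos (L / 2) / 2, half_pos hcos, fun t ht => ?_⟩
  have hsin : cos (L / 2) ≤ sin (k * log t + (π / 2 - k * (log A + log B) / 2)) := by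
    refine cos_le_sin_of_abs_sub_pi_div_two_le ?_ (by linarith)
    convert abs_mul_log_sub_mul_log_midpoint_le hk.le hA ht using 2
    ring
  refine ⟨by linarith, le_of_eq ?_⟩
  rw [deriv_add_mul_deriv_deriv_sin_mul_log_add_sub _ _ _ (hA.trans_le ht.1).ne', hk_def]
  field_simp
  ring
end
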